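/- arXiv:2508.14516 — 2 statements merged into one kernel-verified Lean document; each statement's English description precedes it below -/
import Mathlib

section
/- Let g, h : 2^E → ℝ≥0 be monotone with g(∅) = h(∅) = 0, and consider any double-greedy run for g and h. Then for every k ∈ {0, 1, …, n}, f(H_k) ≥ Σ_{i=1}^{k} φ_i. -/
/-!
Each step of the run adds `e*_i` to the side with the larger marginal gain, so the potential
`h(H_k) + g(G_k)` grows by exactly `φ_k` and telescopes to `∑_{i ≤ k} φ_i`. The sides stay
disjoint, hence `G_k ⊆ E \ H_k`, and monotonicity of `g` gives `f(H_k) ≥ h(H_k) + g(G_k)`.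
-/

namespace IncDec

open Finset

variable {α : Type*} [Fintype α] [DecidableEq α]

/-- Marginal gain `F(x | S) = F(S ∪ {x}) - F(S)`. -/
def marg (F : Finset α → ℝ) (x : α) (S : Finset α) : ℝ := F (insert x S) - F S

/-- Marginal gain of a set: `F(T | S) = F(T ∪ S) - F(S)`. -/
def margSet (F : Finset α → ℝ) (T S : Finset α) : ℝ := F (T ∪ S) - F S

/-- Monotone set function. -/
def Mono (F : Finset α → ℝ) : Prop := ∀ ⦃S T : Finset α⦄, S ⊆ T → F S ≤ F T

/-- Nonnegative set function. -/
def Nonneg (F : Finset α → ℝ) : Prop := ∀ S : Finset α, 0 ≤ F S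

/-- The combined objective `f(S) = h(S) + g(E \ S)`. -/
def fObj (g h : Finset α → ℝ) (S : Finset α) : ℝ := h S + g Sᶜ

/-- `F` has generic submodularity ratio at least `γ`. -/
def GenSubRatioGE (F : Finset α → ℝ) (γ : ℝ) : Prop :=
  ∀ A B : Finset α, ∀ e : α, marg F e A ≥ γ * marg F e (A ∪ B)

/-- `F` has curvature at most `c`. -/
def CurvatureLE (F : Finset α → ℝ) (c : ℝ) : Prop :=
  ∀ A B : Finset α, ∀ e : α, e ∉ B → marg F e (A ∪ B) ≥ (1 - c) * marg F e A

/-- Submodular set function. -/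
def Submodular (F : Finset α → ℝ) : Prop :=
  ∀ ⦃S T : Finset α⦄, S ⊆ T → ∀ e : α, e ∉ T → marg F e T ≤ marg F e S

/-- Modular set function. -/
def Modular (F : Finset α → ℝ) : Prop := ∀ S : Finset α, F S = ∑ e ∈ S, F {e}

/-- Gross substitute set function. -/
def GrossSubstitute (F : Finset α → ℝ) : Prop :=
  Submodular F ∧
    ∀ A B : Finset α, Disjoint A B → 2 ≤ B.card → ∀ b ∈ B,
      ∃ b' ∈ B.erase b,
        marg F b A + margSet F (B.erase b) A ≤ marg F b' A + margSet F (B.erase b') A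

/-- The set of ratios appearing in the definition of the curvature. -/
def curvRatioSet (F : Finset α → ℝ) : Set ℝ :=
  {r | ∃ A B : Finset α, ∃ e : α, e ∉ B ∧ 0 < marg F e A ∧ r = marg F e (A ∪ B) / marg F e A}

/-- `F` has curvature exactly `c` (with `min ∅ := 1`, i.e. `c = 0` if the ratio set is empty). -/
def CurvatureEq (F : Finset α → ℝ) (c : ℝ) : Prop :=
  (¬ (curvRatioSet F).Nonempty ∧ c = 0) ∨ IsLeast (curvRatioSet F) (1 - c)

/-- The set of ratios appearing in the definition of the generic submodularity ratio. -/
def gsRatioSet (F : Finset α → ℝ) : Set ℝ :=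
  {r | ∃ A B : Finset α, ∃ e : α, 0 < marg F e (A ∪ B) ∧ r = marg F e A / marg F e (A ∪ B)}

/-- `F` has generic submodularity ratio exactly `γ` (with `min ∅ := 1`). -/
def GenSubRatioEq (F : Finset α → ℝ) (γ : ℝ) : Prop :=
  (¬ (gsRatioSet F).Nonempty ∧ γ = 1) ∨ IsLeast (gsRatioSet F) γ

/-- The singleton-based ratio set `{F(e | E \ {e}) / F({e}) : e ∈ E, F({e}) > 0}`. -/
def curvSingletonSet (F : Finset α → ℝ) : Set ℝ :=
  {r | ∃ e : α, 0 < F {e} ∧ r = marg F e ({e}ᶜ) / F {e}}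

/-- A run of the double-greedy algorithm for `g` and `h`: distinct elements `elt 0, …,
`elt (n-1)` enumerating `E` (`elt i` is the element `e*_{i+1}` of the paper), together with the
sets `H i`, `G i` (for `0 ≤ i ≤ n`), each new element maximizing the larger marginal gain and
being added to the side realizing it. -/
structure DGRun (α : Type*) [Fintype α] [DecidableEq α] (g h : Finset α → ℝ) where
  elt : ℕ → α
  H : ℕ → Finset α
  G : ℕ → Finset α
  H0 : H 0 = ∅
  G0 : G 0 = ∅
  mem : ∀ i < Fintype.card α, elt i ∉ H i ∪ G i
  distinct : ∀ i < Fintype.card α, ∀ j < Fintype.card α, elt i = elt j → i = j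
  enum : ∀ x : α, ∃ i < Fintype.card α, elt i = x
  greedy : ∀ i < Fintype.card α, ∀ x : α, x ∉ H i ∪ G i →
      max (marg g x (G i)) (marg h x (H i)) ≤ max (marg g (elt i) (G i)) (marg h (elt i) (H i))
  step : ∀ i < Fintype.card α,
      (H (i + 1) = insert (elt i) (H i) ∧ G (i + 1) = G i ∧
        marg g (elt i) (G i) ≤ marg h (elt i) (H i)) ∨
      (G (i + 1) = insert (elt i) (G i) ∧ H (i + 1) = H i ∧
        marg h (elt i) (H i) ≤ marg g (elt i) (G i))

/-- `phi R i` is the increment `φ_{i+1}` of the double-greedy run `R`. -/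
def phi {g h : Finset α → ℝ} (R : DGRun α g h) (i : ℕ) : ℝ :=
  max (marg g (R.elt i) (R.G i)) (marg h (R.elt i) (R.H i))

theorem add_le_fObj_of_disjoint {g h : Finset α → ℝ} (hgm : Mono g) {S T : Finset α}
    (hST : Disjoint S T) : h S + g T ≤ fObj g h S :=
  add_le_add_right (hgm (subset_compl_iff_disjoint_left.mpr hST)) _

namespace DGRun

variable {g h : Finset α → ℝ} (R : DGRun α g h)

theorem disjoint_H_G : ∀ k ≤ Fintype.card α, Disjoint (R.H k) (R.G k)
  | 0, _ => by simp [R.H0, R.G0]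
  | k + 1, hk => by
    have hfresh := R.mem k hk
    rw [mem_union, not_or] at hfresh
    rcases R.step k hk with ⟨hH, hG, -⟩ | ⟨hG, hH, -⟩
    · rw [hH, hG, disjoint_insert_left]
      exact ⟨hfresh.2, disjoint_H_G k (Nat.le_of_succ_le hk)⟩
    · rw [hH, hG, disjoint_insert_right]
      exact ⟨hfresh.1, disjoint_H_G k (Nat.le_of_succ_le hk)⟩

theorem potential_succ {k : ℕ} (hk : k < Fintype.card α) :
    h (R.H (k + 1)) + g (R.G (k + 1)) = h (R.H k) + g (R.G k) + phi R k := by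
  rcases R.step k hk with ⟨hH, hG, hle⟩ | ⟨hG, hH, hle⟩
  · rw [hH, hG, phi, max_eq_right hle, marg]
    ring
  · rw [hH, hG, phi, max_eq_left hle, marg]
    ring

theorem potential_eq_sum_phi (hge : g ∅ = 0) (hhe : h ∅ = 0) :
    ∀ k ≤ Fintype.card α, h (R.H k) + g (R.G k) = ∑ i ∈ range k, phi R i
  | 0, _ => by simp [R.H0, R.G0, hge, hhe]
  | k + 1, hk => by
    rw [R.potential_succ hk, potential_eq_sum_phi hge hhe k (Nat.le_of_succ_le hk), sum_range_succ]

end DGRun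

theorem stmt8_general (g h : Finset α → ℝ)
    (hgm : Mono g)
    (hge : g ∅ = 0) (hhe : h ∅ = 0) (R : DGRun α g h) :
    ∀ k ≤ Fintype.card α, fObj g h (R.H k) ≥ ∑ i ∈ Finset.range k, phi R i := by
  intro k hk
  rw [← R.potential_eq_sum_phi hge hhe k hk]
  exact add_le_fObj_of_disjoint hgm (R.disjoint_H_G k hk)

theorem stmt8 (g h : Finset α → ℝ)
    (hgm : Mono g) (hhm : Mono h) (hg0 : Nonneg g) (hh0 : Nonneg h)
    (hge : g ∅ = 0) (hhe : h ∅ = 0) (R : DGRun α g h) :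
    ∀ k ≤ Fintype.card α, fObj g h (R.H k) ≥ ∑ i ∈ Finset.range k, phi R i :=
  stmt8_general g h hgm hge hhe R

end IncDec
end

section
/- Let g, h : 2^E → ℝ≥0 be monotone with g(∅) = h(∅) = 0, with generic submodularity ratio at least γ ∈ (0,1] and curvature at most c ∈ (0,1], and consider any double-greedy run for g and h. Let S ⊆ E with m := |S| < n and S \ F_m ≠ ∅. Then φ_{m+1} ≥ (c/|S \ F_m|)·(γ·h(S) − Σ_{i=1}^{m} φ_i) + ((1−c)/|S \ F_m|)·(γ·h(S) − Σ_{i : e*_i ∈ F_m ∩ S} φ_i). -/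
namespace IncDec

open Finset

variable {α : Type*} [Fintype α] [DecidableEq α]

/-!
Put `U_i = H_i ∪ (G_i ∩ S)`. In each step, `γ` times the growth of `h(U_i)` exceeds `γ` times the
growth of `h(S ∪ H_i)` by at most `φ_{i+1}` if `e*_{i+1} ∈ S` and by at most `c φ_{i+1}` otherwise:
generic submodularity compares `h(e | U_i)` with `h(e | H_i) ≤ φ_{i+1}`, and when `e ∈ H_{i+1} \ S`
curvature makes `h(S ∪ H_i)` grow by at least `(1 - c) h(e | U_i)`. Telescoping over the first `m`
steps bounds `γ h(S)` by these weighted `φ_i` plus `γ (h(S ∪ H_m) - h(U_m))`. Since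
`S ∪ H_m = U_m ∪ (S \ F_m)`, generic submodularity and the greedy choice bound this last term by
`|S \ F_m| φ_{m+1}`.
-/

section

variable {β : Type*} [DecidableEq β] {F : Finset β → ℝ} {γ : ℝ}

lemma marg_nonneg (hF : Mono F) (x : β) (A : Finset β) : 0 ≤ marg F x A :=
  sub_nonneg.mpr (hF (subset_insert x A))

lemma GenSubRatioGE.mul_sub_le_sum_marg (hF : GenSubRatioGE F γ) {A B : Finset β} (hAB : A ⊆ B)
    (T : Finset β) : γ * (F (B ∪ T) - F B) ≤ ∑ e ∈ T, marg F e A := by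
  induction T using Finset.induction_on with
  | empty => simp
  | insert a T ha ih =>
    have hgain := hF A (B ∪ T) a
    rw [union_eq_right.mpr (hAB.trans subset_union_left)] at hgain
    rw [union_insert, sum_insert ha]
    have hsplit : F (insert a (B ∪ T)) - F B = marg F a (B ∪ T) + (F (B ∪ T) - F B) := by
      simp only [marg]; ring
    rw [hsplit, mul_add]
    linarith

end

namespace DGRun

variable {g h : Finset α → ℝ} {γ c : ℝ} (R : DGRun α g h)

def U (S : Finset α) (i : ℕ) : Finset α := R.H i ∪ (R.G i ∩ S)

lemma phi_nonneg (hh : Mono h) (i : ℕ) : 0 ≤ phi R i :=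
  (marg_nonneg hh _ _).trans (le_max_right _ _)

lemma union_succ {i : ℕ} (hi : i < Fintype.card α) :
    R.H (i + 1) ∪ R.G (i + 1) = insert (R.elt i) (R.H i ∪ R.G i) := by
  rcases R.step i hi with ⟨hH, hG, -⟩ | ⟨hG, hH, -⟩
  · rw [hH, hG, insert_union]
  · rw [hH, hG, union_insert]

lemma union_mono {i j : ℕ} (hij : i ≤ j) (hj : j ≤ Fintype.card α) :
    R.H i ∪ R.G i ⊆ R.H j ∪ R.G j := by
  induction j, hij using Nat.le_induction with
  | base => exact Subset.rfl
  | succ j _ ih =>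
    rw [R.union_succ hj]
    exact (ih (Nat.le_of_succ_le hj)).trans (subset_insert _ _)

lemma elt_mem_union {i j : ℕ} (hij : i < j) (hj : j ≤ Fintype.card α) :
    R.elt i ∈ R.H j ∪ R.G j := by
  apply R.union_mono hij hj
  rw [R.union_succ (hij.trans_le hj)]
  exact mem_insert_self _ _

lemma mul_marg_U_le_phi (hγ : GenSubRatioGE h γ) (S : Finset α) (i : ℕ) :
    γ * marg h (R.elt i) (R.U S i) ≤ phi R i :=
  (hγ (R.H i) (R.G i ∩ S) (R.elt i)).trans (le_max_right _ _)

lemma mul_sub_le_phi (hc : 0 ≤ c) (hγ0 : 0 ≤ γ) (hh : Mono h) (hC : CurvatureLE h c)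
    (hγ : GenSubRatioGE h γ) (S : Finset α) {i : ℕ} (hi : i < Fintype.card α) :
    γ * (h (R.U S (i + 1)) - h (R.U S i)) - γ * (h (S ∪ R.H (i + 1)) - h (S ∪ R.H i)) ≤
      (if R.elt i ∈ S then 1 else c) * phi R i := by
  have hφ := R.phi_nonneg hh i
  have hgain := R.mul_marg_U_le_phi hγ S i
  have hnew : R.elt i ∉ R.H i ∪ R.G i := R.mem i hi
  have hgrow : R.U S (i + 1) = insert (R.elt i) (R.U S i) →
      h (R.U S (i + 1)) - h (R.U S i) = marg h (R.elt i) (R.U S i) := by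
    intro hU; rw [hU, marg]
  rcases R.step i hi with ⟨hH, hG, -⟩ | ⟨hG, hH, -⟩
  · rw [hgrow (by rw [U, U, hH, hG, insert_union]), hH, union_insert]
    split_ifs with hS
    · rw [insert_eq_of_mem (mem_union_left _ hS)]
      linarith
    · have hcurv := hC (R.U S i) (S ∪ R.H i) (R.elt i)
        (by simp only [mem_union, not_or] at hnew ⊢; exact ⟨hS, hnew.1⟩)
      rw [U, union_eq_right.mpr (union_subset subset_union_right
        (inter_subset_right.trans subset_union_left))] at hcurv
      have hcurv' : γ * ((1 - c) * marg h (R.elt i) (R.U S i)) ≤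
          γ * marg h (R.elt i) (S ∪ R.H i) := mul_le_mul_of_nonneg_left hcurv hγ0
      have hmarg := mul_le_mul_of_nonneg_left hgain hc
      simp only [marg] at hcurv' hmarg ⊢
      linarith
  · rw [hH, sub_self, mul_zero, sub_zero]
    split_ifs with hS
    · rw [hgrow (by rw [U, U, hG, hH, insert_inter_of_mem hS, union_insert])]
      linarith
    · rw [U, U, hG, hH, insert_inter_of_notMem hS, sub_self, mul_zero]
      exact mul_nonneg hc hφ

lemma mul_le_sum_add (hc : 0 ≤ c) (hγ0 : 0 ≤ γ) (hh : Mono h) (hh0 : h ∅ = 0)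
    (hC : CurvatureLE h c) (hγ : GenSubRatioGE h γ) (S : Finset α) {k : ℕ}
    (hk : k ≤ Fintype.card α) :
    γ * h S ≤ ∑ i ∈ range k, (if R.elt i ∈ S then 1 else c) * phi R i +
      γ * (h (S ∪ R.H k) - h (R.U S k)) := by
  have htele := sum_range_sub (fun i => γ * h (R.U S i) - γ * h (S ∪ R.H i)) k
  have hstep : ∀ i ∈ range k, γ * h (R.U S (i + 1)) - γ * h (S ∪ R.H (i + 1)) -
      (γ * h (R.U S i) - γ * h (S ∪ R.H i)) ≤ (if R.elt i ∈ S then 1 else c) * phi R i := by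
    intro i hik
    have := R.mul_sub_le_phi hc hγ0 hh hC hγ S ((mem_range.mp hik).trans_le hk)
    linarith
  have hU0 : R.U S 0 = ∅ := by rw [U, R.H0, R.G0, empty_inter, union_empty]
  simp only [hU0, R.H0, union_empty, hh0] at htele
  linarith [sum_le_sum hstep]

lemma mul_sub_le_card_mul_phi (hγ : GenSubRatioGE h γ) (S : Finset α) {m : ℕ}
    (hm : m < Fintype.card α) :
    γ * (h (S ∪ R.H m) - h (R.U S m)) ≤ (S \ (R.H m ∪ R.G m)).card * phi R m := by
  have hsplit : S ∪ R.H m = R.U S m ∪ (S \ (R.H m ∪ R.G m)) := by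
    ext x; simp only [U, mem_union, mem_inter, mem_sdiff]; tauto
  rw [hsplit, ← nsmul_eq_mul]
  refine (hγ.mul_sub_le_sum_marg subset_union_left _).trans (sum_le_card_nsmul _ _ _ ?_)
  intro e he
  exact (le_max_right _ _).trans (R.greedy m hm e (mem_sdiff.mp he).2)

lemma sum_filter_mem_union_inter {m : ℕ} (hm : m ≤ Fintype.card α) (S : Finset α) (f : ℕ → ℝ) :
    ∑ i ∈ range m with R.elt i ∈ (R.H m ∪ R.G m) ∩ S, f i = ∑ i ∈ range m with R.elt i ∈ S, f i :=
  sum_congr (filter_congr fun i hi =>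
    by rw [mem_inter, and_iff_right (R.elt_mem_union (mem_range.mp hi) hm)]) fun _ _ => rfl

end DGRun

lemma sum_ite_one_mul {ι : Type*} (s : Finset ι) (p : ι → Prop) [DecidablePred p] (c : ℝ)
    (f : ι → ℝ) :
    ∑ i ∈ s, (if p i then 1 else c) * f i = c * ∑ i ∈ s, f i + (1 - c) * ∑ i ∈ s with p i, f i := by
  rw [sum_filter, mul_sum, mul_sum, ← sum_add_distrib]
  refine sum_congr rfl fun i _ => ?_
  split_ifs <;> ring

theorem stmt9_general (g h : Finset α → ℝ) (c γ : ℝ)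
    (hhm : Mono h)
    (hhe : h ∅ = 0)
    (hc0 : 0 < c) (hγ0 : 0 < γ)
    (hhC : CurvatureLE h c)
    (hhγ : GenSubRatioGE h γ)
    (R : DGRun α g h) (S : Finset α) (m : ℕ)
    (hmn : m < Fintype.card α) (hne : (S \ (R.H m ∪ R.G m)).Nonempty) :
    phi R m ≥
      (c / ((S \ (R.H m ∪ R.G m)).card : ℝ)) *
          (γ * h S - ∑ i ∈ Finset.range m, phi R i) +
        ((1 - c) / ((S \ (R.H m ∪ R.G m)).card : ℝ)) *
          (γ * h S -
            ∑ i ∈ (Finset.range m).filter (fun i => R.elt i ∈ (R.H m ∪ R.G m) ∩ S),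
              phi R i) := by
  have hcard : (0 : ℝ) < (S \ (R.H m ∪ R.G m)).card := by exact_mod_cast hne.card_pos
  have hpast := R.mul_le_sum_add hc0.le hγ0.le hhm hhe hhC hhγ S hmn.le
  have hfront := R.mul_sub_le_card_mul_phi hhγ S hmn
  rw [sum_ite_one_mul] at hpast
  rw [R.sum_filter_mem_union_inter hmn.le, ge_iff_le, div_mul_eq_mul_div, div_mul_eq_mul_div,
    ← add_div, div_le_iff₀ hcard]
  linarith

theorem stmt9 (g h : Finset α → ℝ) (c γ : ℝ)
    (hgm : Mono g) (hhm : Mono h) (hg0 : Nonneg g) (hh0 : Nonneg h)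
    (hge : g ∅ = 0) (hhe : h ∅ = 0)
    (hc0 : 0 < c) (hc1 : c ≤ 1) (hγ0 : 0 < γ) (hγ1 : γ ≤ 1)
    (hgC : CurvatureLE g c) (hhC : CurvatureLE h c)
    (hgγ : GenSubRatioGE g γ) (hhγ : GenSubRatioGE h γ)
    (R : DGRun α g h) (S : Finset α) (m : ℕ) (hm : S.card = m)
    (hmn : m < Fintype.card α) (hne : (S \ (R.H m ∪ R.G m)).Nonempty) :
    phi R m ≥
      (c / ((S \ (R.H m ∪ R.G m)).card : ℝ)) *
          (γ * h S - ∑ i ∈ Finset.range m, phi R i) +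
        ((1 - c) / ((S \ (R.H m ∪ R.G m)).card : ℝ)) *
          (γ * h S -
            ∑ i ∈ (Finset.range m).filter (fun i => R.elt i ∈ (R.H m ∪ R.G m) ∩ S),
              phi R i) :=
  stmt9_general g h c γ hhm hhe hc0 hγ0 hhC hhγ R S m hmn hne

end IncDec
end
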